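/- arXiv:2404.19387 — 7 statements merged into one kernel-verified Lean document; each statement's English description precedes it below -/
import Mathlib

section
/- For every time t, the aggregate state of charge of any feasible schedule satisfies the lower bound B(t) ≥ ∑_{j ∈ J : d_j ≤ t} E_j + ∑_{j ∈ J : a_j ≤ t < d_j} max{E_j − (d_j − t)·L̄_j, 0}. -/
/-!
Task by task: once its deadline has passed, a task has delivered all of `E_j` before `t`; while
it is active, it can deliver at most `(d_j - t) L̄_j` from `t` on, so at least
`E_j - (d_j - t) L̄_j` must already have been delivered. Summing over tasks gives the bound.
-/

open Finset

section

variable {f : ℕ → ℝ} {a d t : ℕ}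

lemma tsum_eq_sum_range_of_vanishing (hf : ∀ τ, d ≤ τ → f τ = 0) :
    ∑' τ, f τ = ∑ τ ∈ range d, f τ :=
  tsum_eq_sum fun τ hτ => hf τ (by simpa using hτ)

lemma sum_range_eq_tsum_of_vanishing (hf : ∀ τ, d ≤ τ → f τ = 0) (hdt : d ≤ t) :
    ∑ τ ∈ range t, f τ = ∑' τ, f τ := by
  rw [tsum_eq_sum_range_of_vanishing hf]
  exact (sum_subset (range_subset_range.mpr hdt) fun τ _ hτ => hf τ (by simpa using hτ)).symm

lemma tsum_sub_le_sum_range_of_vanishing {c : ℝ} (hf : ∀ τ, d ≤ τ → f τ = 0)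
    (hc : ∀ τ, t ≤ τ → τ < d → f τ ≤ c) (htd : t ≤ d) :
    ∑' τ, f τ - ((d : ℝ) - t) * c ≤ ∑ τ ∈ range t, f τ := by
  have htail : ∑ τ ∈ Ico t d, f τ ≤ ((d : ℝ) - t) * c :=
    calc ∑ τ ∈ Ico t d, f τ ≤ ∑ _τ ∈ Ico t d, c :=
          sum_le_sum fun τ hτ => hc τ (mem_Ico.1 hτ).1 (mem_Ico.1 hτ).2
      _ = ((d : ℝ) - t) * c := by rw [sum_const, Nat.card_Ico, nsmul_eq_mul, Nat.cast_sub htd]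
  rw [tsum_eq_sum_range_of_vanishing hf, ← sum_range_add_sum_Ico f htd]
  linarith

lemma sum_range_ge_completed_add_forced {c E : ℝ}
    (hbound : ∀ τ, a ≤ τ → τ < d → 0 ≤ f τ ∧ f τ ≤ c)
    (hout : ∀ τ, ¬(a ≤ τ ∧ τ < d) → f τ = 0) (hE : ∑' τ, f τ = E) :
    (if d ≤ t then E else 0) + (if a ≤ t ∧ t < d then max (E - ((d : ℝ) - t) * c) 0 else 0)
      ≤ ∑ τ ∈ range t, f τ := by
  subst hE
  have hvanish : ∀ τ, d ≤ τ → f τ = 0 := fun τ h => hout τ (by omega)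
  have hpartial_nonneg : 0 ≤ ∑ τ ∈ range t, f τ := by
    refine sum_nonneg fun τ _ => ?_
    by_cases hτ : a ≤ τ ∧ τ < d
    · exact (hbound τ hτ.1 hτ.2).1
    · exact (hout τ hτ).ge
  by_cases hdt : d ≤ t
  · rw [if_pos hdt, if_neg (by omega), add_zero, sum_range_eq_tsum_of_vanishing hvanish hdt]
  rw [if_neg hdt, zero_add]
  split_ifs with hat
  · refine max_le (tsum_sub_le_sum_range_of_vanishing hvanish (fun τ htτ hτd => ?_) hat.2.le)
      hpartial_nonneg
    exact (hbound τ (hat.1.trans htτ) hτd).2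
  · exact hpartial_nonneg

end

theorem aggregate_soc_lower_bound_general
    {ι : Type*} (J : Finset ι)
    (a d : ι → ℕ) (Lbar : ι → ℝ) (En : ι → ℝ) (L : ι → ℕ → ℝ)
    (hLlb : ∀ j ∈ J, ∀ t : ℕ, a j ≤ t → t < d j → 0 ≤ L j t ∧ L j t ≤ Lbar j)
    (hLout : ∀ j ∈ J, ∀ t : ℕ, ¬(a j ≤ t ∧ t < d j) → L j t = 0)
    (hE : ∀ j ∈ J, ∑' t : ℕ, L j t = En j)
    (B : ℕ → ℝ)
    (hB : ∀ t : ℕ, B t = ∑ τ ∈ Finset.range t, ∑ j ∈ J, L j τ) :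
    ∀ t : ℕ,
      B t ≥ (∑ j ∈ J.filter (fun j => d j ≤ t), En j) +
        ∑ j ∈ J.filter (fun j => a j ≤ t ∧ t < d j),
          max (En j - ((d j : ℝ) - (t : ℝ)) * Lbar j) 0 := by
  intro t
  rw [hB t, sum_comm, ge_iff_le, sum_filter, sum_filter, ← sum_add_distrib]
  exact sum_le_sum fun j hj =>
    sum_range_ge_completed_add_forced (hLlb j hj) (hLout j hj) (hE j hj)

/-- Lower bound on the aggregate state of charge of any
feasible schedule of deferrable tasks. -/
theorem aggregate_soc_lower_bound
    {ι : Type*} (J : Finset ι)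
    (a d : ι → ℕ) (Lbar : ι → ℝ) (En : ι → ℝ) (L : ι → ℕ → ℝ)
    (had : ∀ j ∈ J, a j < d j)
    (hLbar : ∀ j ∈ J, 0 ≤ Lbar j)
    (hLlb : ∀ j ∈ J, ∀ t : ℕ, a j ≤ t → t < d j → 0 ≤ L j t ∧ L j t ≤ Lbar j)
    (hLout : ∀ j ∈ J, ∀ t : ℕ, ¬(a j ≤ t ∧ t < d j) → L j t = 0)
    (hE : ∀ j ∈ J, ∑' t : ℕ, L j t = En j)
    (B U : ℕ → ℝ)
    (hB : ∀ t : ℕ, B t = ∑ τ ∈ Finset.range t, ∑ j ∈ J, L j τ)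
    (hU : ∀ t : ℕ, U t = ∑ j ∈ J, L j t) :
    ∀ t : ℕ,
      B t ≥ (∑ j ∈ J.filter (fun j => d j ≤ t), En j) +
        ∑ j ∈ J.filter (fun j => a j ≤ t ∧ t < d j),
          max (En j - ((d j : ℝ) - (t : ℝ)) * Lbar j) 0 :=
  aggregate_soc_lower_bound_general J a d Lbar En L hLlb hLout hE B hB
end

section
/- If Q + V·P ≤ 0, then there exists a feasible tuple x* ∈ F with fifth component B_e* = 0 such that f(x*) ≤ f(x) for every x ∈ F; that is, problem P3 admits an optimal solution with B_e = 0. -/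
/-!
Write `a = Q + V * P ≤ 0` and `b = V * P ≥ 0`. The objective equals
`a * (Gb + Rb) - b * (Re + Rb) - a * Be`, and on the feasible set `Gb + Rb ≤ Cchar`,
`Be ≥ 0` and `Re + Rb ≤ min R (Cchar + E)`, so it is at least `a * Cchar - b * min R (Cchar + E)`.
Charging at full capacity `Cchar`, of which `min Cchar R` comes from renewables, serving as much
of the demand `E` from the remaining renewables as possible and never discharging attains this bound.
-/

/-- The feasible set of problem P3. -/
def P3Feasible (R E Cchar Cdis : ℝ) (Re Rb Ge Gb Be : ℝ) : Prop :=
  0 ≤ Gb + Rb ∧ Gb + Rb ≤ Cchar ∧ 0 ≤ Gb ∧ 0 ≤ Rb ∧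
  0 ≤ Be ∧ Be ≤ Cdis ∧ 0 ≤ Re + Rb ∧ Re + Rb ≤ R ∧ 0 ≤ Re ∧
  E = Re + Be + Ge ∧ 0 ≤ Ge ∧ (Gb + Rb) * Be = 0

/-- The objective function of problem P3. -/
noncomputable def P3Obj (P V Q : ℝ) (Re Rb Ge Gb Be : ℝ) : ℝ :=
  (Q + V * P) * Gb + Q * Rb - (Q + V * P) * Be - V * P * Re

section P3

variable {R E P V Q Cchar Cdis Re Rb Ge Gb Be : ℝ}

theorem P3Obj_eq :
    P3Obj P V Q Re Rb Ge Gb Be =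
      (Q + V * P) * (Gb + Rb) - V * P * (Re + Rb) - (Q + V * P) * Be := by
  unfold P3Obj
  ring

theorem P3Feasible.add_le_min (hx : P3Feasible R E Cchar Cdis Re Rb Ge Gb Be) :
    Re + Rb ≤ min R (Cchar + E) := by
  obtain ⟨-, hcharge, hGb, -, hBe, -, -, hR, -, hE, hGe, -⟩ := hx
  exact le_min hR (by linarith)

theorem P3Feasible.obj_ge (hQVP : Q + V * P ≤ 0) (hVP : 0 ≤ V * P)
    (hx : P3Feasible R E Cchar Cdis Re Rb Ge Gb Be) :
    (Q + V * P) * Cchar - V * P * min R (Cchar + E) ≤ P3Obj P V Q Re Rb Ge Gb Be := by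
  have hcharge : (Q + V * P) * Cchar ≤ (Q + V * P) * (Gb + Rb) :=
    mul_le_mul_of_nonpos_left hx.2.1 hQVP
  have hrenew : V * P * (Re + Rb) ≤ V * P * min R (Cchar + E) :=
    mul_le_mul_of_nonneg_left hx.add_le_min hVP
  have hdischarge : (Q + V * P) * Be ≤ 0 := mul_nonpos_of_nonpos_of_nonneg hQVP hx.2.2.2.2.1
  rw [P3Obj_eq]
  linarith

theorem min_sub_min_add_min (hE : 0 ≤ E) :
    min (R - min Cchar R) E + min Cchar R = min R (Cchar + E) := by
  rcases le_total Cchar R with h | h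
  · rw [min_eq_left h, ← min_add_add_right, sub_add_cancel, add_comm]
  · rw [min_eq_right h, sub_self, min_eq_left hE, zero_add, min_eq_left (by linarith)]

theorem p3Feasible_full_charge (hR : 0 ≤ R) (hE : 0 ≤ E) (hCchar : 0 ≤ Cchar)
    (hCdis : 0 ≤ Cdis) :
    P3Feasible R E Cchar Cdis (min (R - min Cchar R) E) (min Cchar R)
      (E - min (R - min Cchar R) E) (Cchar - min Cchar R) 0 := by
  have hRb : min Cchar R ≤ Cchar := min_le_left _ _
  have hRbR : min Cchar R ≤ R := min_le_right _ _
  have hRb0 : 0 ≤ min Cchar R := le_min hCchar hR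
  have hReE : min (R - min Cchar R) E ≤ E := min_le_right _ _
  have hReR : min (R - min Cchar R) E ≤ R - min Cchar R := min_le_left _ _
  have hRe0 : 0 ≤ min (R - min Cchar R) E := le_min (by linarith) hE
  exact ⟨by linarith, by linarith, by linarith, hRb0, le_rfl, hCdis, by linarith, by linarith,
    hRe0, by ring, by linarith, mul_zero _⟩

theorem P3Obj_full_charge (hE : 0 ≤ E) :
    P3Obj P V Q (min (R - min Cchar R) E) (min Cchar R)
      (E - min (R - min Cchar R) E) (Cchar - min Cchar R) 0 =
      (Q + V * P) * Cchar - V * P * min R (Cchar + E) := by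
  rw [P3Obj_eq, ← min_sub_min_add_min hE]
  ring

end P3

/-- If `Q + V * P ≤ 0`, problem P3 admits an optimal solution
with `Be = 0`. -/
theorem p3_optimal_no_discharge
    (R E P V Q Cchar Cdis : ℝ)
    (hR : 0 ≤ R) (hE : 0 ≤ E) (hP : 0 ≤ P) (hV : 0 < V)
    (hCchar : 0 ≤ Cchar) (hCdis : 0 ≤ Cdis)
    (hQVP : Q + V * P ≤ 0) :
    ∃ Re Rb Ge Gb Be : ℝ,
      P3Feasible R E Cchar Cdis Re Rb Ge Gb Be ∧ Be = 0 ∧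
      ∀ Re' Rb' Ge' Gb' Be' : ℝ,
        P3Feasible R E Cchar Cdis Re' Rb' Ge' Gb' Be' →
        P3Obj P V Q Re Rb Ge Gb Be ≤ P3Obj P V Q Re' Rb' Ge' Gb' Be' := by
  refine ⟨_, _, _, _, 0, p3Feasible_full_charge hR hE hCchar hCdis, rfl,
    fun Re' Rb' Ge' Gb' Be' hx => ?_⟩
  rw [P3Obj_full_charge hE]
  exact hx.obj_ge hQVP (mul_nonneg hV.le hP)
end

section
/- If Q > 0, then there exists a feasible tuple x* ∈ F with G_b* = 0 and R_b* = 0 such that f(x*) ≤ f(x) for every x ∈ F; that is, problem P3 admits an optimal solution with no charging from either the grid or the renewable source. -/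
/-!
Without charging, the objective is `-((Q + V P) B_e + V P R_e)`, and charging only adds the
nonnegative terms `(Q + V P) G_b + Q R_b`. So it suffices to maximise `(Q + V P) B_e + V P R_e`
under `B_e ≤ C_dis`, `R_e ≤ R`, `B_e + R_e ≤ E`. Since discharging earns at least as much per
unit as renewable supply, the greedy choice `B_e = min C_dis E`, `R_e = min R (E - B_e)` is optimal.
-/

section Greedy

variable {a b c r e x y : ℝ}

theorem add_le_min_add_min (hy : 0 ≤ y) (hxc : x ≤ c) (hyr : y ≤ r) (hxy : x + y ≤ e) :
    x + y ≤ min c e + min r (e - min c e) := by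
  rw [← min_add_add_left, add_sub_cancel]
  exact le_min (add_le_add (le_min hxc (by linarith)) hyr) hxy

theorem mul_add_mul_le_greedy (ha : 0 ≤ a) (hab : a ≤ b) (hy : 0 ≤ y) (hxc : x ≤ c)
    (hyr : y ≤ r) (hxy : x + y ≤ e) :
    b * x + a * y ≤ b * min c e + a * min r (e - min c e) := by
  have hx : x ≤ min c e := le_min hxc (by linarith)
  calc b * x + a * y = (b - a) * x + a * (x + y) := by ring
    _ ≤ (b - a) * min c e + a * (min c e + min r (e - min c e)) :=
        add_le_add (mul_le_mul_of_nonneg_left hx (by linarith))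
          (mul_le_mul_of_nonneg_left (add_le_min_add_min hy hxc hyr hxy) ha)
    _ = b * min c e + a * min r (e - min c e) := by ring

end Greedy

theorem p3Feasible_no_charge {R E Cchar Cdis Re Ge Be : ℝ} (hCchar : 0 ≤ Cchar)
    (hBe : 0 ≤ Be) (hBeC : Be ≤ Cdis) (hRe : 0 ≤ Re) (hReR : Re ≤ R) (hGe : 0 ≤ Ge)
    (hE : E = Re + Be + Ge) :
    P3Feasible R E Cchar Cdis Re 0 Ge 0 Be := by
  refine ⟨?_, ?_, le_rfl, le_rfl, hBe, hBeC, ?_, ?_, hRe, hE, hGe, ?_⟩ <;> simp [hCchar, hRe, hReR]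

theorem p3Obj_no_charge (P V Q Re Ge Be : ℝ) :
    P3Obj P V Q Re 0 Ge 0 Be = -((Q + V * P) * Be + V * P * Re) := by
  simp only [P3Obj]
  ring

theorem neg_le_p3Obj {R E Cchar Cdis P V Q Re Rb Ge Gb Be : ℝ} (hQ : 0 ≤ Q) (hVP : 0 ≤ V * P)
    (h : P3Feasible R E Cchar Cdis Re Rb Ge Gb Be) :
    -((Q + V * P) * Be + V * P * Re) ≤ P3Obj P V Q Re Rb Ge Gb Be := by
  obtain ⟨-, -, hGb, hRb, -⟩ := h
  have : 0 ≤ (Q + V * P) * Gb + Q * Rb := by positivity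
  simp only [P3Obj]
  linarith

/-- If `Q > 0`, problem P3 admits an optimal solution with no
charging from either the grid or the renewable source. -/
theorem p3_optimal_no_charge
    (R E P V Q Cchar Cdis : ℝ)
    (hR : 0 ≤ R) (hE : 0 ≤ E) (hP : 0 ≤ P) (hV : 0 < V)
    (hCchar : 0 ≤ Cchar) (hCdis : 0 ≤ Cdis)
    (hQ : 0 < Q) :
    ∃ Re Rb Ge Gb Be : ℝ,
      P3Feasible R E Cchar Cdis Re Rb Ge Gb Be ∧ Gb = 0 ∧ Rb = 0 ∧
      ∀ Re' Rb' Ge' Gb' Be' : ℝ,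
        P3Feasible R E Cchar Cdis Re' Rb' Ge' Gb' Be' →
        P3Obj P V Q Re Rb Ge Gb Be ≤ P3Obj P V Q Re' Rb' Ge' Gb' Be' := by
  set Be := min Cdis E
  set Re := min R (E - Be)
  have hBeE : Be ≤ E := min_le_right _ _
  have hReE : Re ≤ E - Be := min_le_right _ _
  have hVP : 0 ≤ V * P := mul_nonneg hV.le hP
  refine ⟨Re, 0, E - Re - Be, 0, Be, ?_, rfl, rfl, ?_⟩
  · exact p3Feasible_no_charge hCchar (le_min hCdis hE) (min_le_left _ _)
      (le_min hR (by linarith)) (min_le_left _ _) (by linarith) (by ring)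
  · intro Re' Rb' Ge' Gb' Be' hx
    have hcharge := neg_le_p3Obj hQ.le hVP hx
    obtain ⟨-, -, -, hRb', -, hBeC', -, hReR', hRe', hE', hGe', -⟩ := hx
    rw [p3Obj_no_charge]
    calc -((Q + V * P) * Be + V * P * Re)
        ≤ -((Q + V * P) * Be' + V * P * Re') :=
          neg_le_neg (mul_add_mul_le_greedy hVP (by linarith) hRe' hBeC' (by linarith)
            (by linarith))
      _ ≤ P3Obj P V Q Re' Rb' Ge' Gb' Be' := hcharge
end

section
/- Suppose Q ≤ 0 < Q + V·P. Define the discharge candidate x_d by R_e = min{R, E}, B_e = min{C_dis, E − R_e}, R_b = 0, G_b = 0, G_e = E − R_e − B_e, and the charge candidate x_c by R_e = min{R, E}, B_e = 0, R_b = min{R − R_e, C_char}, G_b = 0, G_e = E − R_e. Then both x_d and x_c are feasible for P3, and min{f(x_d), f(x_c)} ≤ f(x) for every x ∈ F; that is, the optimum of P3 is attained at one of these two explicit tuples. -/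
/-- When `Q ≤ 0 < Q + V * P`, the optimum of P3 is attained
at one of two explicit candidates (discharge or charge). -/
theorem p3_explicit_solution_case2
    (R E P V Q Cchar Cdis : ℝ)
    (hR : 0 ≤ R) (hE : 0 ≤ E) (hP : 0 ≤ P) (hV : 0 < V)
    (hCchar : 0 ≤ Cchar) (hCdis : 0 ≤ Cdis)
    (hQ : Q ≤ 0) (hQVP : 0 < Q + V * P) :
    P3Feasible R E Cchar Cdis
      (min R E) 0 (E - min R E - min Cdis (E - min R E)) 0
      (min Cdis (E - min R E)) ∧
    P3Feasible R E Cchar Cdis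
      (min R E) (min (R - min R E) Cchar) (E - min R E) 0 0 ∧
    ∀ Re' Rb' Ge' Gb' Be' : ℝ,
      P3Feasible R E Cchar Cdis Re' Rb' Ge' Gb' Be' →
      min
        (P3Obj P V Q (min R E) 0 (E - min R E - min Cdis (E - min R E)) 0
          (min Cdis (E - min R E)))
        (P3Obj P V Q (min R E) (min (R - min R E) Cchar) (E - min R E) 0 0) ≤
      P3Obj P V Q Re' Rb' Ge' Gb' Be' := by
  have hm0 : 0 ≤ min R E := le_min hR hE
  have hmR : min R E ≤ R := min_le_left _ _
  have hmE : min R E ≤ E := min_le_right _ _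
  have hVP : 0 ≤ V * P := mul_nonneg hV.le hP
  refine ⟨?_, ?_, ?_⟩
  · refine ⟨by norm_num, by simpa using hCchar, le_refl 0, le_refl 0,
      le_min hCdis (by linarith), min_le_left _ _, by simpa using hm0,
      by simpa using hmR, hm0, by ring, ?_, by ring⟩
    have : min Cdis (E - min R E) ≤ E - min R E := min_le_right _ _
    linarith
  · refine ⟨?_, ?_, le_refl 0, le_min (by linarith) hCchar, le_refl 0, hCdis,
      ?_, ?_, hm0, by ring, by linarith, by ring⟩
    · simpa using le_min (by linarith : (0:ℝ) ≤ R - min R E) hCchar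
    · simpa using min_le_right (R - min R E) Cchar
    · have : (0:ℝ) ≤ min (R - min R E) Cchar := le_min (by linarith) hCchar
      linarith
    · have : min (R - min R E) Cchar ≤ R - min R E := min_le_left _ _
      linarith
  · rintro Re' Rb' Ge' Gb' Be'
      ⟨h1, h2, h3, h4, h5, h6, h7, h8, h9, h10, h11, h12⟩
    have hRe'm : Re' ≤ min R E := le_min (by linarith) (by linarith)
    rcases mul_eq_zero.mp h12 with hc | hc
    · -- Gb' = Rb' = 0 : compare with discharge candidate
      have hGb : Gb' = 0 := by linarith
      have hRb : Rb' = 0 := by linarith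
      refine (min_le_left _ _).trans ?_
      simp only [P3Obj, hGb, hRb]
      have hBe1 : Be' + Re' - min R E ≤ min Cdis (E - min R E) := by
        refine le_min (by linarith) (by linarith)
      have hBm : min Cdis (E - min R E) ≤ Cdis := min_le_left _ _
      nlinarith [mul_nonneg hVP (sub_nonneg.mpr hRe'm),
        mul_nonneg (neg_nonneg.mpr hQ) (sub_nonneg.mpr hRe'm)]
    · -- Be' = 0 : compare with charge candidate
      refine (min_le_right _ _).trans ?_
      simp only [P3Obj, hc]
      have hRb1 : Rb' + Re' - min R E ≤ min (R - min R E) Cchar := by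
        refine le_min (by linarith) (by linarith)
      nlinarith [mul_nonneg hVP (sub_nonneg.mpr hRe'm),
        mul_nonneg (neg_nonneg.mpr hQ) (sub_nonneg.mpr hRe'm),
        mul_nonneg hQVP.le h3]
end

section
/- Suppose additionally that B(t) is defined by B(t) = Q(t) + B̄_min + V·P_max + C_dis, that B_min(t) ≤ B̄_min and B̄_max ≤ B_max(t) for all t, and that the initial state of charge satisfies B̄_min ≤ B(0) ≤ B̄_max. Then for all t ∈ ℕ, the time-varying battery capacity constraints are respected: B_min(t) ≤ B(t) ≤ B_max(t). -/
/-!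
The state of charge is the virtual queue `Q` shifted by a constant, so it suffices to trap `Q`
in the interval `[-V Pmax - Cdis, Bmaxbar - Bminbar - V Pmax - Cdis]`. Below the lower end
`Q + V P ≤ 0`, so nothing is discharged and `Q` cannot decrease; above zero nothing is charged
and `Q` cannot increase; in between one step moves `Q` by at most `Cdis` down or `Cchar` up,
and `V ≤ V_max` is exactly the condition that leaves room for this.
-/

open Set

theorem add_sub_ge_of_discharge_gated {q c e θ Θ D : ℝ} (hc : 0 ≤ c) (he : e ≤ D)
    (hθ : θ ≤ Θ) (hgate : q + θ ≤ 0 → e = 0) (hq : -Θ - D ≤ q) :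
    -Θ - D ≤ q + c - e := by
  by_cases hq0 : q + θ ≤ 0
  · rw [hgate hq0]
    linarith
  · linarith

theorem add_sub_le_of_charge_gated {q c e C U : ℝ} (he : 0 ≤ e) (hc : c ≤ C) (hCU : C ≤ U)
    (hgate : 0 < q → c = 0) (hq : q ≤ U) :
    q + c - e ≤ U := by
  by_cases hq0 : 0 < q
  · rw [hgate hq0]
    linarith
  · linarith

theorem gated_queue_mem_Icc {Q c e θ : ℕ → ℝ} {Θ C D U : ℝ}
    (hQ : ∀ t, Q (t + 1) = Q t + c t - e t)
    (hc0 : ∀ t, 0 ≤ c t) (hc : ∀ t, c t ≤ C) (he0 : ∀ t, 0 ≤ e t) (he : ∀ t, e t ≤ D)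
    (hθ : ∀ t, θ t ≤ Θ) (hCU : C ≤ U)
    (hdischarge : ∀ t, Q t + θ t ≤ 0 → e t = 0) (hcharge : ∀ t, 0 < Q t → c t = 0)
    (h0 : Q 0 ∈ Icc (-Θ - D) U) :
    ∀ t, Q t ∈ Icc (-Θ - D) U := by
  intro t
  induction t with
  | zero => exact h0
  | succ t ih =>
    rw [hQ t]
    exact ⟨add_sub_ge_of_discharge_gated (hc0 t) (he t) (hθ t) (hdischarge t) ih.1,
      add_sub_le_of_charge_gated (he0 t) (hc t) hCU (hcharge t) ih.2⟩

theorem soc_respects_capacity_bounds_general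
    (Pmax Cchar Cdis Bminbar Bmaxbar V : ℝ)
    (hPmax : 0 < Pmax)
    (hV0 : 0 < V)
    (hVmax : V ≤ (Bmaxbar - Bminbar - Cdis - Cchar) / Pmax)
    (Gb Rb Be P Q : ℕ → ℝ)
    (hchar0 : ∀ t : ℕ, 0 ≤ Gb t + Rb t)
    (hchar : ∀ t : ℕ, Gb t + Rb t ≤ Cchar)
    (hBe0 : ∀ t : ℕ, 0 ≤ Be t) (hBe : ∀ t : ℕ, Be t ≤ Cdis)
    (hPm : ∀ t : ℕ, P t ≤ Pmax)
    (hQ : ∀ t : ℕ, Q (t + 1) = Q t + Gb t + Rb t - Be t)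
    (halg1 : ∀ t : ℕ, Q t + V * P t ≤ 0 → Be t = 0)
    (halg2 : ∀ t : ℕ, 0 < Q t → Gb t = 0 ∧ Rb t = 0)
    (B Bmin Bmax : ℕ → ℝ)
    (hBdef : ∀ t : ℕ, B t = Q t + Bminbar + V * Pmax + Cdis)
    (hBmin : ∀ t : ℕ, Bmin t ≤ Bminbar)
    (hBmax : ∀ t : ℕ, Bmaxbar ≤ Bmax t)
    (hB0lb : Bminbar ≤ B 0) (hB0ub : B 0 ≤ Bmaxbar) :
    ∀ t : ℕ, Bmin t ≤ B t ∧ B t ≤ Bmax t := by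
  have hVP : V * Pmax ≤ Bmaxbar - Bminbar - Cdis - Cchar := (le_div_iff₀ hPmax).mp hVmax
  have hQbounds := gated_queue_mem_Icc (c := fun t => Gb t + Rb t) (θ := fun t => V * P t)
    (Θ := V * Pmax) (U := Bmaxbar - Bminbar - V * Pmax - Cdis)
    (fun t => by rw [hQ t]; ring) hchar0 hchar hBe0 hBe
    (fun t => mul_le_mul_of_nonneg_left (hPm t) hV0.le) (by linarith) halg1
    (fun t hQt => by simp [halg2 t hQt])
    ⟨by linarith [hBdef 0], by linarith [hBdef 0]⟩
  intro t
  obtain ⟨hlo, hhi⟩ := hQbounds t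
  exact ⟨by linarith [hBdef t, hBmin t], by linarith [hBdef t, hBmax t]⟩

/-- Under the online algorithm, the state of charge respects
the time-varying battery capacity constraints at all times. -/
theorem soc_respects_capacity_bounds
    (Pmax Cchar Cdis Bminbar Bmaxbar V : ℝ)
    (hPmax : 0 < Pmax) (hCchar : 0 ≤ Cchar) (hCdis : 0 ≤ Cdis)
    (hV0 : 0 < V)
    (hVmax : V ≤ (Bmaxbar - Bminbar - Cdis - Cchar) / Pmax)
    (Gb Rb Be P Q : ℕ → ℝ)
    (hGb : ∀ t : ℕ, 0 ≤ Gb t) (hRb : ∀ t : ℕ, 0 ≤ Rb t)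
    (hchar0 : ∀ t : ℕ, 0 ≤ Gb t + Rb t)
    (hchar : ∀ t : ℕ, Gb t + Rb t ≤ Cchar)
    (hBe0 : ∀ t : ℕ, 0 ≤ Be t) (hBe : ∀ t : ℕ, Be t ≤ Cdis)
    (hP0 : ∀ t : ℕ, 0 ≤ P t) (hPm : ∀ t : ℕ, P t ≤ Pmax)
    (hQ : ∀ t : ℕ, Q (t + 1) = Q t + Gb t + Rb t - Be t)
    (halg1 : ∀ t : ℕ, Q t + V * P t ≤ 0 → Be t = 0)
    (halg2 : ∀ t : ℕ, 0 < Q t → Gb t = 0 ∧ Rb t = 0)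
    (B Bmin Bmax : ℕ → ℝ)
    (hBdef : ∀ t : ℕ, B t = Q t + Bminbar + V * Pmax + Cdis)
    (hBmin : ∀ t : ℕ, Bmin t ≤ Bminbar)
    (hBmax : ∀ t : ℕ, Bmaxbar ≤ Bmax t)
    (hB0lb : Bminbar ≤ B 0) (hB0ub : B 0 ≤ Bmaxbar) :
    ∀ t : ℕ, Bmin t ≤ B t ∧ B t ≤ Bmax t :=
  soc_respects_capacity_bounds_general Pmax Cchar Cdis Bminbar Bmaxbar V hPmax hV0 hVmax Gb Rb Be P
    Q hchar0 hchar hBe0 hBe hPm hQ halg1 halg2 B Bmin Bmax hBdef hBmin hBmax hB0lb hB0ub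
end

section
/- Let Q, G_b, R_b be reals with G_b ≥ 0, R_b ≥ 0, 0 ≤ G_b + R_b ≤ C_char, and suppose −V·P_max − C_dis ≤ Q ≤ −V·P_max and the discharge decision is B_e = 0. Then Q' = Q + G_b + R_b − B_e satisfies −V·P_max − C_dis ≤ Q' ≤ B̄_max − B̄_min − C_dis − V·P_max. -/
theorem queue_one_step_case1_general
    (Pmax Cchar Cdis Bminbar Bmaxbar V : ℝ)
    (hPmax : 0 < Pmax)
    (hV0 : 0 < V)
    (hVmax : V ≤ (Bmaxbar - Bminbar - Cdis - Cchar) / Pmax)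
    (Q Gb Rb Be Q' : ℝ)
    (hchar0 : 0 ≤ Gb + Rb) (hchar : Gb + Rb ≤ Cchar)
    (hQlb : -(V * Pmax) - Cdis ≤ Q) (hQub : Q ≤ -(V * Pmax))
    (hBe : Be = 0)
    (hQ' : Q' = Q + Gb + Rb - Be) :
    -(V * Pmax) - Cdis ≤ Q' ∧ Q' ≤ Bmaxbar - Bminbar - Cdis - V * Pmax := by
  have hVPmax : V * Pmax ≤ Bmaxbar - Bminbar - Cdis - Cchar := (le_div_iff₀ hPmax).mp hVmax
  have hVPmax_pos : 0 < V * Pmax := mul_pos hV0 hPmax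
  subst hBe hQ'
  constructor <;> linarith

/-- One-step queue bound in the deep-discharge-forbidden
region `−V·P_max − C_dis ≤ Q ≤ −V·P_max`. -/
theorem queue_one_step_case1
    (Pmax Cchar Cdis Bminbar Bmaxbar V : ℝ)
    (hPmax : 0 < Pmax) (hCchar : 0 ≤ Cchar) (hCdis : 0 ≤ Cdis)
    (hV0 : 0 < V)
    (hVmax : V ≤ (Bmaxbar - Bminbar - Cdis - Cchar) / Pmax)
    (Q Gb Rb Be Q' : ℝ)
    (hGb : 0 ≤ Gb) (hRb : 0 ≤ Rb)
    (hchar0 : 0 ≤ Gb + Rb) (hchar : Gb + Rb ≤ Cchar)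
    (hQlb : -(V * Pmax) - Cdis ≤ Q) (hQub : Q ≤ -(V * Pmax))
    (hBe : Be = 0)
    (hQ' : Q' = Q + Gb + Rb - Be) :
    -(V * Pmax) - Cdis ≤ Q' ∧ Q' ≤ Bmaxbar - Bminbar - Cdis - V * Pmax :=
  queue_one_step_case1_general Pmax Cchar Cdis Bminbar Bmaxbar V hPmax hV0 hVmax Q Gb Rb Be Q'
    hchar0 hchar hQlb hQub hBe hQ'
end

section
/- Let Q, G_b, R_b, B_e be reals with G_b ≥ 0, R_b ≥ 0, 0 ≤ G_b + R_b ≤ C_char, 0 ≤ B_e ≤ C_dis, and suppose −V·P_max < Q ≤ 0. Then Q' = Q + G_b + R_b − B_e satisfies −V·P_max − C_dis < Q' ≤ B̄_max − B̄_min − C_dis − V·P_max. -/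
theorem queue_one_step_case2_general
    (Pmax Cchar Cdis Bminbar Bmaxbar V : ℝ)
    (hPmax : 0 < Pmax)
    (hVmax : V ≤ (Bmaxbar - Bminbar - Cdis - Cchar) / Pmax)
    (Q Gb Rb Be Q' : ℝ)
    (hchar0 : 0 ≤ Gb + Rb) (hchar : Gb + Rb ≤ Cchar)
    (hBe0 : 0 ≤ Be) (hBe : Be ≤ Cdis)
    (hQlb : -(V * Pmax) < Q) (hQub : Q ≤ 0)
    (hQ' : Q' = Q + Gb + Rb - Be) :
    -(V * Pmax) - Cdis < Q' ∧ Q' ≤ Bmaxbar - Bminbar - Cdis - V * Pmax := by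
  have hVPmax : V * Pmax ≤ Bmaxbar - Bminbar - Cdis - Cchar := (le_div_iff₀ hPmax).mp hVmax
  subst hQ'
  constructor <;> linarith

/-- One-step queue bound in the region `−V·P_max < Q ≤ 0`. -/
theorem queue_one_step_case2
    (Pmax Cchar Cdis Bminbar Bmaxbar V : ℝ)
    (hPmax : 0 < Pmax) (hCchar : 0 ≤ Cchar) (hCdis : 0 ≤ Cdis)
    (hV0 : 0 < V)
    (hVmax : V ≤ (Bmaxbar - Bminbar - Cdis - Cchar) / Pmax)
    (Q Gb Rb Be Q' : ℝ)
    (hGb : 0 ≤ Gb) (hRb : 0 ≤ Rb)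
    (hchar0 : 0 ≤ Gb + Rb) (hchar : Gb + Rb ≤ Cchar)
    (hBe0 : 0 ≤ Be) (hBe : Be ≤ Cdis)
    (hQlb : -(V * Pmax) < Q) (hQub : Q ≤ 0)
    (hQ' : Q' = Q + Gb + Rb - Be) :
    -(V * Pmax) - Cdis < Q' ∧ Q' ≤ Bmaxbar - Bminbar - Cdis - V * Pmax :=
  queue_one_step_case2_general Pmax Cchar Cdis Bminbar Bmaxbar V hPmax hVmax Q Gb Rb Be Q' hchar0
    hchar hBe0 hBe hQlb hQub hQ'
end
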